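/- Let μ > 0, γ > 0, σ ≥ 1, T_f > 0 and constants C_{γ,0}, C_{μ,0} > 0 be given. Then there exists a constant C > 0, depending only on μ, γ, σ, C_{γ,0}, C_{μ,0} and T_f (but not on ε), such that for every ε ∈ (0,1) the following holds: if ψ is a solution of the AL lattice on [0,T_f] and φ is a solution of the DNLS lattice with power nonlinearity on [0,T_f] with identical initial data φ(0) = ψ(0) satisfying ‖φ(0)‖_{ℓ²} ≤ C_{γ,0} ε and ∑_{n∈ℤ} ln(1 + μ|ψ_n(0)|²) ≤ ln(1 + (C_{μ,0} ε)²), then sup_{n∈ℤ} |ψ_n(t) − φ_n(t)| ≤ C ε³ for every t ∈ [0,T_f]. -/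

import Mathlib

/-!
Both lattices carry a conserved quantity controlling the ℓ² norm: the mass `∑ |φₙ|²` for DNLS and
`∑ log (1 + μ |ψₙ|²)` for AL. Each obeys a discrete continuity equation `∂ₜ gₙ = Jₙ - Jₙ₋₁` whose
current is a multiple of `Im (x̄ₙ xₙ₊₁)`, so it is conserved, and by concavity of the logarithm the
AL quantity bounds `μ ‖ψ‖²` by `(Cμ₀ ε)²`. Hence both solutions stay in an ℓ² ball of radius `P ε`.
On that ball the AL vector field is Lipschitz with a constant independent of `ε`, and it differs
from the DNLS field by terms of order `ε³` (the nonlinearities have degree `3` and `2σ + 1 ≥ 3`).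
Grönwall's inequality with `ψ(0) = φ(0)` then bounds `‖ψ(t) - φ(t)‖` in ℓ², hence in ℓ∞, by `C ε³`.
-/

noncomputable section

open Set

/-- The sequence space ℓ²(ℤ,ℂ). -/
abbrev Seq2 := lp (fun _ : ℤ => ℂ) 2

/-- `ψ` is a solution of the Ablowitz–Ladik (AL) lattice (κ = ν = 1) on `[0,Tf]`:
a continuously differentiable curve into ℓ²(ℤ,ℂ) satisfying
`i dψ_n/dt = (ψ_{n+1} − 2ψ_n + ψ_{n−1}) + μ|ψ_n|²(ψ_{n+1} + ψ_{n−1})` componentwise. -/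
def IsALSolution (μ Tf : ℝ) (ψ : ℝ → Seq2) : Prop :=
  ∃ ψdot : ℝ → Seq2, ContinuousOn ψdot (Icc 0 Tf) ∧
    ∀ t ∈ Icc (0:ℝ) Tf,
      HasDerivWithinAt ψ (ψdot t) (Icc 0 Tf) t ∧
      ∀ n : ℤ, Complex.I * ψdot t n =
        (ψ t (n+1) - 2 * ψ t n + ψ t (n-1))
          + (μ : ℂ) * ((‖ψ t n‖)^2 : ℝ) * (ψ t (n+1) + ψ t (n-1))

/-- `φ` is a solution of the DNLS lattice with power nonlinearity on `[0,Tf]`: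
a continuously differentiable curve into ℓ²(ℤ,ℂ) satisfying
`i dφ_n/dt = (φ_{n+1} − 2φ_n + φ_{n−1}) + γ|φ_n|^{2σ}φ_n` componentwise. -/
def IsDNLSSolution (γ σ Tf : ℝ) (φ : ℝ → Seq2) : Prop :=
  ∃ φdot : ℝ → Seq2, ContinuousOn φdot (Icc 0 Tf) ∧
    ∀ t ∈ Icc (0:ℝ) Tf,
      HasDerivWithinAt φ (φdot t) (Icc 0 Tf) t ∧
      ∀ n : ℤ, Complex.I * φdot t n =
        (φ t (n+1) - 2 * φ t n + φ t (n-1))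
          + (γ : ℂ) * ((‖φ t n‖) ^ (2*σ) : ℝ) * φ t n

open Filter Topology ComplexConjugate

theorem Finset.sum_Icc_sub_pred_eq {M : Type*} [AddCommGroup M] (q : ℤ → M) {a b : ℤ}
    (hab : a - 1 ≤ b) : ∑ n ∈ Finset.Icc a b, (q n - q (n - 1)) = q b - q (a - 1) := by
  induction b, hab using Int.leInduction with
  | base => simp
  | succ b hb ih =>
    rw [← Finset.insert_Icc_right_eq_Icc_add_one (by omega), Finset.sum_insert (by simp), ih]
    simp only [add_sub_cancel_right]
    abel

section ContinuityEquation

variable {a b : ℝ} {g J : ℝ → ℤ → ℝ}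

lemma sum_Icc_sub_eq_integral_sub_integral (hab : a ≤ b)
    (hg : ∀ n, ∀ t ∈ Icc a b, HasDerivWithinAt (g · n) (J t n - J t (n - 1)) (Icc a b) t)
    (hJ : ∀ n, ContinuousOn (J · n) (Icc a b)) (N : ℕ) :
    ∑ n ∈ Finset.Icc (-(N : ℤ)) N, (g b n - g a n) =
      (∫ t in a..b, J t N) - ∫ t in a..b, J t (-N - 1) := by
  have hF : ∀ t ∈ Icc a b, HasDerivWithinAt (fun s => ∑ n ∈ Finset.Icc (-(N : ℤ)) N, g s n)
      (J t N - J t (-N - 1)) (Icc a b) t := by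
    intro t ht
    have := HasDerivWithinAt.fun_sum (u := Finset.Icc (-(N : ℤ)) N) fun n _ => hg n t ht
    rwa [Finset.sum_Icc_sub_pred_eq (J t) (by omega)] at this
  have hJi : ∀ n, IntervalIntegrable (J · n) MeasureTheory.volume a b :=
    fun n => (hJ n).intervalIntegrable_of_Icc hab
  rw [Finset.sum_sub_distrib, ← intervalIntegral.integral_sub (hJi _) (hJi _)]
  refine (intervalIntegral.integral_eq_sub_of_hasDeriv_right_of_le hab
    (fun t ht => (hF t ht).continuousWithinAt) (fun t ht => ?_) ((hJi _).sub (hJi _))).symm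
  exact ((hF t (Ioo_subset_Icc_self ht)).hasDerivAt (Icc_mem_nhds ht.1 ht.2)).hasDerivWithinAt

lemma tendsto_integral_of_tendsto_cofinite_zero (hab : a ≤ b)
    (hJ : ∀ n, ContinuousOn (J · n) (Icc a b)) {M : ℝ} (hM : ∀ t ∈ Icc a b, ∀ n, |J t n| ≤ M)
    (hJ0 : ∀ t ∈ Icc a b, Tendsto (J t) cofinite (𝓝 0)) {j : ℕ → ℤ}
    (hj : Tendsto j atTop cofinite) :
    Tendsto (fun N => ∫ t in a..b, J t (j N)) atTop (𝓝 0) := by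
  have hsub : uIoc a b ⊆ Icc a b := by
    rw [uIoc_of_le hab]
    exact Ioc_subset_Icc_self
  simpa using intervalIntegral.tendsto_integral_filter_of_dominated_convergence (fun _ => M)
    (.of_forall fun N => ((hJ (j N)).mono hsub).aestronglyMeasurable measurableSet_uIoc)
    (.of_forall fun N => .of_forall fun t ht => hM t (hsub ht) _) intervalIntegrable_const
    (.of_forall fun t ht => (hJ0 t (hsub ht)).comp hj)

/-- Summing over `[-N, N]` telescopes the currents; integrated in time, the two boundary currents
vanish as `N → ∞` by dominated convergence. -/
theorem tsum_eq_of_hasDerivWithinAt_sub (hab : a ≤ b)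
    (hg : ∀ n, ∀ t ∈ Icc a b, HasDerivWithinAt (g · n) (J t n - J t (n - 1)) (Icc a b) t)
    (hJ : ∀ n, ContinuousOn (J · n) (Icc a b)) {M : ℝ} (hM : ∀ t ∈ Icc a b, ∀ n, |J t n| ≤ M)
    (hJ0 : ∀ t ∈ Icc a b, Tendsto (J t) cofinite (𝓝 0))
    (hga : Summable (g a)) (hgb : Summable (g b)) :
    ∑' n, g b n = ∑' n, g a n := by
  have hsums : Tendsto (fun N : ℕ => ∑ n ∈ Finset.Icc (-(N : ℤ)) N, (g b n - g a n)) atTop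
      (𝓝 (∑' n, g b n - ∑' n, g a n)) :=
    SummationFilter.hasSum_symmetricIcc_iff.mp
      ((hgb.hasSum.sub hga.hasSum).mono_left (SummationFilter.symmetricIcc ℤ).le_atTop)
  have hcast : Tendsto (fun N : ℕ => (N : ℤ)) atTop cofinite :=
    Nat.cofinite_eq_atTop ▸ Nat.cast_injective.tendsto_cofinite
  have hneg : Tendsto (fun N : ℕ => -(N : ℤ) - 1) atTop cofinite :=
    Nat.cofinite_eq_atTop ▸ Function.Injective.tendsto_cofinite fun m n h => by simpa using h
  have hflux : Tendsto (fun N : ℕ => ∑ n ∈ Finset.Icc (-(N : ℤ)) N, (g b n - g a n)) atTop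
      (𝓝 0) := by
    simp_rw [sum_Icc_sub_eq_integral_sub_integral hab hg hJ]
    simpa using (tendsto_integral_of_tendsto_cofinite_zero hab hJ hM hJ0 hcast).sub
      (tendsto_integral_of_tendsto_cofinite_zero hab hJ hM hJ0 hneg)
  exact sub_eq_zero.mp (tendsto_nhds_unique hsums hflux)

end ContinuityEquation

namespace lp

section Basic

variable {ι : Type*} {E : ι → Type*} [∀ i, NormedAddCommGroup (E i)]

lemma summable_norm_sq (f : lp E 2) : Summable fun i => ‖f i‖ ^ 2 := by
  simpa using (lp.memℓp f).summable (p := 2) (by norm_num)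

lemma norm_sq_eq_tsum (f : lp E 2) : ‖f‖ ^ 2 = ∑' i, ‖f i‖ ^ 2 := by
  simpa using lp.norm_rpow_eq_tsum (p := 2) (by norm_num) f

lemma tendsto_norm_cofinite_zero (f : lp E 2) : Tendsto (fun i => ‖f i‖) cofinite (𝓝 0) := by
  simpa using (summable_norm_sq f).tendsto_cofinite_zero.sqrt

lemma hasDerivWithinAt_apply [∀ i, NormedSpace ℝ (E i)] {p : ENNReal} [Fact (1 ≤ p)]
    {u : ℝ → lp E p} {u' : lp E p} {s : Set ℝ} {t : ℝ} (h : HasDerivWithinAt u u' s t) (i : ι) :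
    HasDerivWithinAt (fun s => u s i) (u' i) s t :=
  (lp.evalCLM ℝ E p i).hasFDerivAt.comp_hasDerivWithinAt t h

end Basic

section Shift

variable {F : Type*} [NormedAddCommGroup F]

def shift (x : lp (fun _ : ℤ => F) 2) (k : ℤ) : lp (fun _ : ℤ => F) 2 :=
  ⟨fun n => x (n + k), memℓp_gen <| by
    simpa [Function.comp_def] using (Equiv.addRight k).summable_iff.2 (summable_norm_sq x)⟩

@[simp] lemma shift_apply (x : lp (fun _ : ℤ => F) 2) (k n : ℤ) : shift x k n = x (n + k) := rfl

@[simp] lemma norm_shift (x : lp (fun _ : ℤ => F) 2) (k : ℤ) : ‖shift x k‖ = ‖x‖ := by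
  refine (pow_left_inj₀ (norm_nonneg _) (norm_nonneg _) two_ne_zero).1 ?_
  rw [norm_sq_eq_tsum, norm_sq_eq_tsum]
  exact (Equiv.addRight k).tsum_eq fun n => ‖x n‖ ^ 2

end Shift

end lp

section Stencil

variable {F : Type*} [NormedAddCommGroup F]

def normStencil (a b : ℝ) (x : lp (fun _ : ℤ => F) 2) : lp (fun _ : ℤ => ℝ) 2 :=
  a • lp.toNorm (lp.shift x 1) + a • lp.toNorm (lp.shift x (-1)) + b • lp.toNorm x

lemma normStencil_apply (a b : ℝ) (x : lp (fun _ : ℤ => F) 2) (n : ℤ) :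
    normStencil a b x n = a * (‖x (n + 1)‖ + ‖x (n - 1)‖) + b * ‖x n‖ := by
  simp only [normStencil, lp.coeFn_add, lp.coeFn_smul, Pi.add_apply, Pi.smul_apply, smul_eq_mul,
    lp.toNorm_coe, lp.shift_apply, ← sub_eq_add_neg]
  ring

lemma norm_normStencil_le {a b : ℝ} (ha : 0 ≤ a) (hb : 0 ≤ b) (x : lp (fun _ : ℤ => F) 2) :
    ‖normStencil a b x‖ ≤ (2 * a + b) * ‖x‖ := by
  calc ‖normStencil a b x‖
      ≤ ‖a • lp.toNorm (lp.shift x 1)‖ + ‖a • lp.toNorm (lp.shift x (-1))‖ + ‖b • lp.toNorm x‖ :=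
        norm_add₃_le
    _ = (2 * a + b) * ‖x‖ := by
        simp only [norm_smul, lp.norm_toNorm, lp.norm_shift, Real.norm_of_nonneg ha,
          Real.norm_of_nonneg hb]
        ring

end Stencil

def flux (x : ℤ → ℂ) (n : ℤ) : ℝ := (conj (x n) * x (n + 1)).im

/-- `IsALSolution μ Tf ψ` reads `I * ψ' t n = alVectorField μ (ψ t) n` up to unfolding, and
likewise `IsDNLSSolution` with `dnlsVectorField`. -/
def alVectorField (μ : ℝ) (x : ℤ → ℂ) (n : ℤ) : ℂ :=
  (x (n+1) - 2 * x n + x (n-1)) + (μ : ℂ) * ((‖x n‖)^2 : ℝ) * (x (n+1) + x (n-1))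

def dnlsVectorField (γ σ : ℝ) (x : ℤ → ℂ) (n : ℤ) : ℂ :=
  (x (n+1) - 2 * x n + x (n-1)) + (γ : ℂ) * ((‖x n‖) ^ (2*σ) : ℝ) * x n

lemma abs_flux_le (x : ℤ → ℂ) (n : ℤ) : |flux x n| ≤ ‖x n‖ * ‖x (n + 1)‖ := by
  simpa [flux] using Complex.abs_im_le_norm (conj (x n) * x (n + 1))

lemma im_conj_mul_alVectorField (μ : ℝ) (x : ℤ → ℂ) (n : ℤ) :
    (conj (x n) * alVectorField μ x n).im = (1 + μ * ‖x n‖ ^ 2) * (flux x n - flux x (n - 1)) := by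
  simp only [alVectorField, flux, sub_add_cancel, Complex.mul_im, Complex.mul_re,
    Complex.add_im, Complex.add_re, Complex.sub_im, Complex.sub_re, Complex.conj_re,
    Complex.conj_im, Complex.ofReal_re, Complex.ofReal_im, Complex.re_ofNat, Complex.im_ofNat]
  ring

lemma im_conj_mul_dnlsVectorField (γ σ : ℝ) (x : ℤ → ℂ) (n : ℤ) :
    (conj (x n) * dnlsVectorField γ σ x n).im = flux x n - flux x (n - 1) := by
  simp only [dnlsVectorField, flux, sub_add_cancel, Complex.mul_im, Complex.mul_re,
    Complex.add_im, Complex.add_re, Complex.sub_im, Complex.sub_re, Complex.conj_re,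
    Complex.conj_im, Complex.ofReal_re, Complex.ofReal_im, Complex.re_ofNat, Complex.im_ofNat]
  ring

section PointwiseEstimates

variable {μ ρ : ℝ} {x y : ℤ → ℂ} {n : ℤ}

lemma norm_alVectorField_sub_le (hμ : 0 ≤ μ) (hx : ‖x n‖ ≤ ρ) (hy : ‖y n‖ ≤ ρ)
    (hyr : ‖y (n + 1)‖ ≤ ρ) (hyl : ‖y (n - 1)‖ ≤ ρ) :
    ‖alVectorField μ x n - alVectorField μ y n‖ ≤
      (1 + μ * ρ ^ 2) * (‖x (n + 1) - y (n + 1)‖ + ‖x (n - 1) - y (n - 1)‖)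
        + (2 + 4 * μ * ρ ^ 2) * ‖x n - y n‖ := by
  set wr := x (n + 1) - y (n + 1)
  set wl := x (n - 1) - y (n - 1)
  set wc := x n - y n
  have hρ : 0 ≤ ρ := (norm_nonneg _).trans hx
  have hdecomp : alVectorField μ x n - alVectorField μ y n =
      (wr - 2 * wc + wl) + ((μ * ‖x n‖ ^ 2 : ℝ) : ℂ) * (wr + wl)
        + ((μ * (‖x n‖ ^ 2 - ‖y n‖ ^ 2) : ℝ) : ℂ) * (y (n + 1) + y (n - 1)) := by
    simp only [alVectorField, wr, wl, wc]
    push_cast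
    ring
  have hlin : ‖wr - 2 * wc + wl‖ ≤ ‖wr‖ + 2 * ‖wc‖ + ‖wl‖ := by
    have h2 : ‖(2 : ℂ) * wc‖ = 2 * ‖wc‖ := by simp
    linarith [norm_add_le (wr - 2 * wc) wl, norm_sub_le wr (2 * wc)]
  have hcub : ‖((μ * ‖x n‖ ^ 2 : ℝ) : ℂ) * (wr + wl)‖ ≤ μ * ρ ^ 2 * (‖wr‖ + ‖wl‖) := by
    rw [norm_mul, Complex.norm_real, Real.norm_of_nonneg (by positivity)]
    gcongr
    exact norm_add_le _ _
  have hsq : |‖x n‖ ^ 2 - ‖y n‖ ^ 2| ≤ 2 * ρ * ‖wc‖ := by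
    rw [sq_sub_sq, abs_mul, abs_of_nonneg (by positivity)]
    gcongr
    · linarith
    · exact abs_norm_sub_norm_le _ _
  have hmix : ‖((μ * (‖x n‖ ^ 2 - ‖y n‖ ^ 2) : ℝ) : ℂ) * (y (n + 1) + y (n - 1))‖
      ≤ μ * (2 * ρ * ‖wc‖) * (2 * ρ) := by
    rw [norm_mul, Complex.norm_real, Real.norm_eq_abs, abs_mul, abs_of_nonneg hμ]
    gcongr
    exact (norm_add_le _ _).trans (by linarith)
  rw [hdecomp]
  calc _ ≤ _ := norm_add₃_le
    _ ≤ (‖wr‖ + 2 * ‖wc‖ + ‖wl‖) + μ * ρ ^ 2 * (‖wr‖ + ‖wl‖) + μ * (2 * ρ * ‖wc‖) * (2 * ρ) := by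
      gcongr
    _ = _ := by ring

lemma norm_alVectorField_sub_dnlsVectorField_le {γ σ : ℝ} (hμ : 0 ≤ μ) (hγ : 0 ≤ γ)
    (hσ : 0 ≤ σ) (hy : ‖y n‖ ≤ ρ) :
    ‖alVectorField μ y n - dnlsVectorField γ σ y n‖ ≤
      μ * ρ ^ 2 * (‖y (n + 1)‖ + ‖y (n - 1)‖) + γ * ρ ^ (2 * σ) * ‖y n‖ := by
  have hdecomp : alVectorField μ y n - dnlsVectorField γ σ y n =
      ((μ * ‖y n‖ ^ 2 : ℝ) : ℂ) * (y (n + 1) + y (n - 1))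
        - ((γ * ‖y n‖ ^ (2 * σ) : ℝ) : ℂ) * y n := by
    simp only [alVectorField, dnlsVectorField, Complex.ofReal_mul]
    ring
  rw [hdecomp]
  refine (norm_sub_le _ _).trans (add_le_add ?_ ?_) <;>
    rw [norm_mul, Complex.norm_real, Real.norm_of_nonneg (by positivity)]
  · gcongr
    exact norm_add_le _ _
  · gcongr

end PointwiseEstimates

theorem norm_sub_le_of_alVectorField_of_dnlsVectorField {μ γ σ ρ : ℝ} (hμ : 0 ≤ μ) (hγ : 0 ≤ γ)
    (hσ : 0 ≤ σ) {x y x' y' : Seq2} (hx' : ∀ n, Complex.I * x' n = alVectorField μ x n)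
    (hy' : ∀ n, Complex.I * y' n = dnlsVectorField γ σ y n) (hx : ‖x‖ ≤ ρ) (hy : ‖y‖ ≤ ρ) :
    ‖x' - y'‖ ≤ (4 + 6 * μ * ρ ^ 2) * ‖x - y‖ + (2 * μ * ρ ^ 2 + γ * ρ ^ (2 * σ)) * ‖y‖ := by
  have hρ : 0 ≤ ρ := (norm_nonneg _).trans hx
  have hxn : ∀ n, ‖x n‖ ≤ ρ := fun n => (lp.norm_apply_le_norm two_ne_zero x n).trans hx
  have hyn : ∀ n, ‖y n‖ ≤ ρ := fun n => (lp.norm_apply_le_norm two_ne_zero y n).trans hy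
  set Z := normStencil (1 + μ * ρ ^ 2) (2 + 4 * μ * ρ ^ 2) (x - y)
    + normStencil (μ * ρ ^ 2) (γ * ρ ^ (2 * σ)) y
  have hpointwise : ∀ n, ‖(x' - y') n‖ ≤ ‖Z n‖ := by
    intro n
    refine le_trans ?_ (Real.le_norm_self _)
    have hI : ‖(x' - y') n‖ = ‖alVectorField μ x n - dnlsVectorField γ σ y n‖ := by
      rw [← hx', ← hy', ← mul_sub, norm_mul, Complex.norm_I, one_mul, lp.coeFn_sub, Pi.sub_apply]
    rw [hI]
    simp only [Z, lp.coeFn_add, Pi.add_apply, normStencil_apply, lp.coeFn_sub, Pi.sub_apply]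
    exact (norm_sub_le_norm_sub_add_norm_sub _ (alVectorField μ y n) _).trans (add_le_add
      (norm_alVectorField_sub_le hμ (hxn n) (hyn n) (hyn _) (hyn _))
      (norm_alVectorField_sub_dnlsVectorField_le hμ hγ hσ (hyn n)))
  calc ‖x' - y'‖ ≤ ‖Z‖ := lp.norm_mono two_ne_zero hpointwise
    _ ≤ (2 * (1 + μ * ρ ^ 2) + (2 + 4 * μ * ρ ^ 2)) * ‖x - y‖
        + (2 * (μ * ρ ^ 2) + γ * ρ ^ (2 * σ)) * ‖y‖ :=
      (norm_add_le _ _).trans (add_le_add (norm_normStencil_le (by positivity) (by positivity) _)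
        (norm_normStencil_le (by positivity) (by positivity) _))
    _ = _ := by ring

theorem norm_sub_le_of_alVectorField_of_dnlsVectorField_of_le_mul {μ γ σ P ε : ℝ} (hμ : 0 ≤ μ)
    (hγ : 0 ≤ γ) (hσ : 1 ≤ σ) (hP : 0 ≤ P) (hε : 0 ≤ ε) (hε1 : ε ≤ 1) {x y x' y' : Seq2}
    (hx' : ∀ n, Complex.I * x' n = alVectorField μ x n)
    (hy' : ∀ n, Complex.I * y' n = dnlsVectorField γ σ y n) (hx : ‖x‖ ≤ P * ε)
    (hy : ‖y‖ ≤ P * ε) :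
    ‖x' - y'‖ ≤
      (4 + 6 * μ * P ^ 2) * ‖x - y‖ + (2 * μ * P ^ 2 + γ * P ^ (2 * σ)) * P * ε ^ 3 := by
  have hε2 : ε ^ 2 ≤ 1 := pow_le_one₀ hε hε1
  have hρ : (P * ε) ^ 2 ≤ P ^ 2 := by
    rw [mul_pow]
    exact mul_le_of_le_one_right (sq_nonneg P) hε2
  have hρσ : (P * ε) ^ (2 * σ) ≤ P ^ (2 * σ) * ε ^ 2 := by
    rw [Real.mul_rpow hP hε]
    exact mul_le_mul_of_nonneg_left ((Real.rpow_le_rpow_of_exponent_ge' hε hε1 zero_le_two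
      (by linarith)).trans_eq (Real.rpow_two ε)) (by positivity)
  refine (norm_sub_le_of_alVectorField_of_dnlsVectorField hμ hγ (by linarith) hx' hy' hx hy).trans
    (add_le_add (mul_le_mul_of_nonneg_right (by gcongr) (norm_nonneg _)) ?_)
  calc (2 * μ * (P * ε) ^ 2 + γ * (P * ε) ^ (2 * σ)) * ‖y‖
      ≤ (2 * μ * P ^ 2 * ε ^ 2 + γ * (P ^ (2 * σ) * ε ^ 2)) * (P * ε) :=
        mul_le_mul (add_le_add (le_of_eq (by ring)) (mul_le_mul_of_nonneg_left hρσ hγ)) hy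
          (norm_nonneg _) (by positivity)
    _ = _ := by ring

lemma continuousOn_flux {s : Set ℝ} {u : ℝ → Seq2} (hu : ContinuousOn u s) (n : ℤ) :
    ContinuousOn (fun t => flux (u t) n) s := by
  have hu' : ∀ m, ContinuousOn (fun t => u t m) s :=
    fun m => (lp.evalCLM ℝ (fun _ : ℤ => ℂ) 2 m).continuous.comp_continuousOn hu
  exact Complex.continuous_im.comp_continuousOn
    ((Complex.continuous_conj.comp_continuousOn (hu' n)).mul (hu' (n + 1)))

lemma tendsto_flux_cofinite_zero (x : Seq2) : Tendsto (flux x) cofinite (𝓝 0) := by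
  have h := (lp.tendsto_norm_cofinite_zero x).mul_const ‖x‖
  rw [zero_mul] at h
  refine squeeze_zero_norm (fun n => ?_) h
  rw [Real.norm_eq_abs]
  exact (abs_flux_le x n).trans (by gcongr; exact lp.norm_apply_le_norm two_ne_zero x _)

theorem tsum_eq_of_hasDerivWithinAt_flux_sub {Tf c : ℝ} {u : ℝ → Seq2}
    (hu : ContinuousOn u (Icc 0 Tf)) {g : ℝ → ℤ → ℝ}
    (hg : ∀ n, ∀ t ∈ Icc 0 Tf,
      HasDerivWithinAt (g · n) (c * (flux (u t) n - flux (u t) (n - 1))) (Icc 0 Tf) t)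
    (hsum : ∀ t ∈ Icc 0 Tf, Summable (g t)) {t : ℝ} (ht : t ∈ Icc 0 Tf) :
    ∑' n, g t n = ∑' n, g 0 n := by
  obtain ⟨M, hM⟩ := isCompact_Icc.exists_bound_of_continuousOn hu
  have hsub : Icc 0 t ⊆ Icc 0 Tf := Icc_subset_Icc_right ht.2
  have hM0 : 0 ≤ M := (norm_nonneg _).trans (hM t ht)
  have hcomp : ∀ s ∈ Icc 0 t, ∀ m, ‖u s m‖ ≤ M :=
    fun s hs m => (lp.norm_apply_le_norm two_ne_zero _ m).trans (hM s (hsub hs))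
  refine tsum_eq_of_hasDerivWithinAt_sub (J := fun s n => c * flux (u s) n) ht.1
    (fun n s hs => ?_) (fun n => ((continuousOn_flux hu n).const_smul c).mono hsub)
    (M := |c| * (M * M)) (fun s hs n => ?_)
    (fun s _ => by simpa using (tendsto_flux_cofinite_zero (u s)).const_mul c)
    (hsum 0 ⟨le_rfl, ht.1.trans ht.2⟩) (hsum t ht)
  · rw [← mul_sub]
    exact (hg n s (hsub hs)).mono hsub
  · rw [abs_mul]
    gcongr
    exact (abs_flux_le _ n).trans (mul_le_mul (hcomp s hs _) (hcomp s hs _) (norm_nonneg _) hM0)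

lemma hasDerivWithinAt_norm_sq_of_I_mul_eq {z : ℝ → ℂ} {z' F : ℂ} {s : Set ℝ} {t : ℝ}
    (hz : HasDerivWithinAt z z' s t) (hF : Complex.I * z' = F) :
    HasDerivWithinAt (fun s => ‖z s‖ ^ 2) (2 * (conj (z t) * F).im) s t := by
  convert hz.norm_sq using 2
  rw [← hF, Complex.inner, mul_left_comm, Complex.I_mul_im, mul_comm]

section LogMass

variable {ι : Type*} {E : ι → Type*} [∀ i, NormedAddCommGroup (E i)] {μ : ℝ}

lemma summable_log_one_add_mul_norm_sq (hμ : 0 ≤ μ) (f : lp E 2) :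
    Summable fun i => Real.log (1 + μ * ‖f i‖ ^ 2) :=
  .of_nonneg_of_le (fun i => Real.log_nonneg (le_add_of_nonneg_right (by positivity)))
    (fun i => (Real.log_le_sub_one_of_pos (by positivity)).trans_eq (by ring))
    ((lp.summable_norm_sq f).mul_left μ)

/-- Bernoulli's inequality `(1 + B) ^ (x / B) ≤ 1 + x`, after taking logarithms. -/
lemma mul_log_one_add_le_mul_log_one_add {x B : ℝ} (hx : 0 ≤ x) (hxB : x ≤ B) (hB : 0 < B) :
    x * Real.log (1 + B) ≤ B * Real.log (1 + x) := by
  have h := Real.log_le_log (by positivity) (rpow_one_add_le_one_add_mul_self (s := B)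
    (by linarith) (p := x / B) (by positivity) (div_le_one_of_le₀ hxB hB.le))
  rwa [Real.log_rpow (by linarith), div_mul_cancel₀ x hB.ne', div_mul_eq_mul_div,
    div_le_iff₀ hB, mul_comm (Real.log _)] at h

theorem mul_norm_sq_le_of_tsum_log_le {B : ℝ} (hμ : 0 ≤ μ) (hB : 0 < B) (f : lp E 2)
    (h : ∑' i, Real.log (1 + μ * ‖f i‖ ^ 2) ≤ Real.log (1 + B)) : μ * ‖f‖ ^ 2 ≤ B := by
  have hsum := summable_log_one_add_mul_norm_sq hμ f
  have hterm : ∀ i, μ * ‖f i‖ ^ 2 ≤ B := fun i => by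
    have hi := (hsum.le_tsum i fun j _ =>
      Real.log_nonneg (le_add_of_nonneg_right (by positivity))).trans h
    linarith [(Real.log_le_log_iff (by positivity) (by positivity)).1 hi]
  refine le_of_mul_le_mul_right ?_ (Real.log_pos (by linarith) : 0 < Real.log (1 + B))
  calc μ * ‖f‖ ^ 2 * Real.log (1 + B) = ∑' i, μ * ‖f i‖ ^ 2 * Real.log (1 + B) := by
        rw [lp.norm_sq_eq_tsum, ← tsum_mul_left, ← tsum_mul_right]
    _ ≤ ∑' i, B * Real.log (1 + μ * ‖f i‖ ^ 2) :=
        Summable.tsum_le_tsum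
          (fun i => mul_log_one_add_le_mul_log_one_add (by positivity) (hterm i) hB)
          (((lp.summable_norm_sq f).mul_left μ).mul_right _) (hsum.mul_left B)
    _ = B * ∑' i, Real.log (1 + μ * ‖f i‖ ^ 2) := tsum_mul_left
    _ ≤ B * Real.log (1 + B) := by gcongr

end LogMass

namespace IsALSolution

variable {μ Tf : ℝ} {ψ : ℝ → Seq2}

lemma continuousOn (h : IsALSolution μ Tf ψ) : ContinuousOn ψ (Icc 0 Tf) := by
  obtain ⟨ψ', -, hψ'⟩ := h
  exact fun t ht => (hψ' t ht).1.continuousWithinAt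

lemma hasDerivWithinAt_log (h : IsALSolution μ Tf ψ) (hμ : 0 ≤ μ) (n : ℤ) {t : ℝ}
    (ht : t ∈ Icc 0 Tf) :
    HasDerivWithinAt (fun s => Real.log (1 + μ * ‖ψ s n‖ ^ 2))
      (2 * μ * (flux (ψ t) n - flux (ψ t) (n - 1))) (Icc 0 Tf) t := by
  obtain ⟨ψ', -, hψ'⟩ := h
  have hsq := hasDerivWithinAt_norm_sq_of_I_mul_eq (F := alVectorField μ (ψ t) n)
    (lp.hasDerivWithinAt_apply (hψ' t ht).1 n) ((hψ' t ht).2 n)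
  have hpos : 0 < 1 + μ * ‖ψ t n‖ ^ 2 := by positivity
  convert ((hsq.const_mul μ).const_add 1).log hpos.ne' using 1
  rw [im_conj_mul_alVectorField]
  field_simp

theorem tsum_log_eq (h : IsALSolution μ Tf ψ) (hμ : 0 ≤ μ) {t : ℝ} (ht : t ∈ Icc 0 Tf) :
    ∑' n, Real.log (1 + μ * ‖ψ t n‖ ^ 2) = ∑' n, Real.log (1 + μ * ‖ψ 0 n‖ ^ 2) :=
  tsum_eq_of_hasDerivWithinAt_flux_sub h.continuousOn
    (fun n _ hs => h.hasDerivWithinAt_log hμ n hs)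
    (fun s _ => summable_log_one_add_mul_norm_sq hμ (ψ s)) ht

end IsALSolution

namespace IsDNLSSolution

variable {γ σ Tf : ℝ} {φ : ℝ → Seq2}

lemma continuousOn (h : IsDNLSSolution γ σ Tf φ) : ContinuousOn φ (Icc 0 Tf) := by
  obtain ⟨φ', -, hφ'⟩ := h
  exact fun t ht => (hφ' t ht).1.continuousWithinAt

theorem norm_eq (h : IsDNLSSolution γ σ Tf φ) {t : ℝ} (ht : t ∈ Icc 0 Tf) : ‖φ t‖ = ‖φ 0‖ := by
  have hmass : ∑' n, ‖φ t n‖ ^ 2 = ∑' n, ‖φ 0 n‖ ^ 2 := by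
    refine tsum_eq_of_hasDerivWithinAt_flux_sub h.continuousOn (c := 2) (fun n s hs => ?_)
      (fun s _ => lp.summable_norm_sq (φ s)) ht
    obtain ⟨φ', -, hφ'⟩ := h
    rw [← im_conj_mul_dnlsVectorField γ σ]
    exact hasDerivWithinAt_norm_sq_of_I_mul_eq (lp.hasDerivWithinAt_apply (hφ' s hs).1 n)
      ((hφ' s hs).2 n)
  rw [← lp.norm_sq_eq_tsum, ← lp.norm_sq_eq_tsum] at hmass
  exact (pow_left_inj₀ (norm_nonneg _) (norm_nonneg _) two_ne_zero).1 hmass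

end IsDNLSSolution

lemma gronwallBound_zero_le {K δ x T : ℝ} (hK : 0 < K) (hδ : 0 ≤ δ) (hxT : x ≤ T) :
    gronwallBound 0 K δ x ≤ δ * Real.exp (K * T) / K := by
  have hexp : Real.exp (K * x) ≤ Real.exp (K * T) := by gcongr
  simp only [gronwallBound_of_K_ne_0 hK.ne', zero_mul, zero_add]
  calc δ / K * (Real.exp (K * x) - 1) ≤ δ / K * Real.exp (K * T) := by gcongr; linarith
    _ = _ := by ring

theorem norm_sub_le_of_isALSolution_of_isDNLSSolution {μ γ σ Tf P ε : ℝ} (hμ : 0 ≤ μ)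
    (hγ : 0 ≤ γ) (hσ : 1 ≤ σ) (hP : 0 ≤ P) (hε : 0 ≤ ε) (hε1 : ε ≤ 1) {ψ φ : ℝ → Seq2}
    (hψ : IsALSolution μ Tf ψ) (hφ : IsDNLSSolution γ σ Tf φ) (h0 : φ 0 = ψ 0)
    (hψP : ∀ t ∈ Icc 0 Tf, ‖ψ t‖ ≤ P * ε) (hφP : ∀ t ∈ Icc 0 Tf, ‖φ t‖ ≤ P * ε) {t : ℝ}
    (ht : t ∈ Icc 0 Tf) :
    ‖ψ t - φ t‖ ≤ (2 * μ * P ^ 2 + γ * P ^ (2 * σ)) * P * Real.exp ((4 + 6 * μ * P ^ 2) * Tf)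
      / (4 + 6 * μ * P ^ 2) * ε ^ 3 := by
  obtain ⟨ψ', -, hψ'⟩ := hψ
  obtain ⟨φ', -, hφ'⟩ := hφ
  have hgron := norm_le_gronwallBound_of_norm_deriv_right_le
    (fun s hs => ((hψ' s hs).1.sub (hφ' s hs).1).continuousWithinAt)
    (fun s hs => ((hψ' s (Ico_subset_Icc_self hs)).1.sub (hφ' s (Ico_subset_Icc_self hs)).1)
      |>.mono_of_mem_nhdsWithin (Icc_mem_nhdsGE_of_mem hs))
    (by rw [Pi.sub_apply, h0, sub_self, norm_zero])
    (fun s hs => norm_sub_le_of_alVectorField_of_dnlsVectorField_of_le_mul hμ hγ hσ hP hε hε1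
      (hψ' s (Ico_subset_Icc_self hs)).2 (hφ' s (Ico_subset_Icc_self hs)).2
      (hψP s (Ico_subset_Icc_self hs)) (hφP s (Ico_subset_Icc_self hs))) t ht
  rw [sub_zero] at hgron
  calc ‖ψ t - φ t‖ ≤ _ := hgron
    _ ≤ _ := gronwallBound_zero_le (by positivity) (by positivity) ht.2
    _ = _ := by ring

theorem al_dnls_closeness_linfty_general (μ γ σ Tf Cγ₀ Cμ₀ : ℝ)
    (hμ : 0 < μ) (hγ : 0 < γ) (hσ : 1 ≤ σ)
    (hCγ₀ : 0 < Cγ₀) (hCμ₀ : 0 < Cμ₀) :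
    ∃ C : ℝ, 0 < C ∧
      ∀ ε : ℝ, 0 < ε → ε < 1 →
        ∀ ψ φ : ℝ → Seq2, IsALSolution μ Tf ψ → IsDNLSSolution γ σ Tf φ →
          φ 0 = ψ 0 →
          ‖φ 0‖ ≤ Cγ₀ * ε →
          (∑' n : ℤ, Real.log (1 + μ * (‖ψ 0 n‖)^2))
            ≤ Real.log (1 + (Cμ₀ * ε)^2) →
          ∀ t ∈ Icc (0:ℝ) Tf, ∀ n : ℤ,
            ‖ψ t n - φ t n‖ ≤ C * ε^3 := by
  set P := max (Cμ₀ / √μ) Cγ₀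
  have hP : 0 < P := lt_max_of_lt_right hCγ₀
  refine ⟨(2 * μ * P ^ 2 + γ * P ^ (2 * σ)) * P * Real.exp ((4 + 6 * μ * P ^ 2) * Tf)
    / (4 + 6 * μ * P ^ 2), by positivity, fun ε hε hε1 ψ φ hψ hφ h0 hφ0 hψ0 t ht n => ?_⟩
  have hφP : ∀ s ∈ Icc 0 Tf, ‖φ s‖ ≤ P * ε := fun s hs => by
    rw [hφ.norm_eq hs]
    exact hφ0.trans (by gcongr; exact le_max_right _ _)
  have hψP : ∀ s ∈ Icc 0 Tf, ‖ψ s‖ ≤ P * ε := fun s hs => by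
    have hmass := mul_norm_sq_le_of_tsum_log_le hμ.le (by positivity) (ψ s)
      ((hψ.tsum_log_eq hμ.le hs).trans_le hψ0)
    have hsqrt : √μ * ‖ψ s‖ ≤ Cμ₀ * ε := by
      refine (pow_le_pow_iff_left₀ (by positivity) (by positivity) two_ne_zero).1 ?_
      rwa [mul_pow, Real.sq_sqrt hμ.le]
    calc ‖ψ s‖ ≤ Cμ₀ / √μ * ε := by
          rw [div_mul_eq_mul_div, le_div_iff₀ (by positivity)]
          linarith
      _ ≤ P * ε := by gcongr; exact le_max_left _ _
  calc ‖ψ t n - φ t n‖ ≤ ‖ψ t - φ t‖ := lp.norm_apply_le_norm two_ne_zero (ψ t - φ t) n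
    _ ≤ _ := norm_sub_le_of_isALSolution_of_isDNLSSolution hμ.le hγ.le hσ hP.le hε.le hε1.le
      hψ hφ h0 hψP hφP ht

/-- Closeness of the AL and DNLS (power nonlinearity) solutions in the ℓ∞-metric
for identical initial data: `sup_{n∈ℤ} |ψ_n(t) − φ_n(t)| ≤ C ε³` on `[0,Tf]`,
with `C` independent of `ε`. -/
theorem al_dnls_closeness_linfty (μ γ σ Tf Cγ₀ Cμ₀ : ℝ)
    (hμ : 0 < μ) (hγ : 0 < γ) (hσ : 1 ≤ σ) (hTf : 0 < Tf)
    (hCγ₀ : 0 < Cγ₀) (hCμ₀ : 0 < Cμ₀) :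
    ∃ C : ℝ, 0 < C ∧
      ∀ ε : ℝ, 0 < ε → ε < 1 →
        ∀ ψ φ : ℝ → Seq2, IsALSolution μ Tf ψ → IsDNLSSolution γ σ Tf φ →
          φ 0 = ψ 0 →
          ‖φ 0‖ ≤ Cγ₀ * ε →
          (∑' n : ℤ, Real.log (1 + μ * (‖ψ 0 n‖)^2))
            ≤ Real.log (1 + (Cμ₀ * ε)^2) →
          ∀ t ∈ Icc (0:ℝ) Tf, ∀ n : ℤ,
            ‖ψ t n - φ t n‖ ≤ C * ε^3 :=
  al_dnls_closeness_linfty_general μ γ σ Tf Cγ₀ Cμ₀ hμ hγ hσ hCγ₀ hCμ₀
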